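/- Let Z be a stability function on an abelian category 𝒜 and let E be a nonzero object. If 0 = E₀ ⊊ E₁ ⊊ … ⊊ Eₙ = E and 0 = E′₀ ⊊ E′₁ ⊊ … ⊊ E′ₘ = E are two Harder–Narasimhan filtrations of E (i.e., chains of subobjects whose subquotients E_i/E_{i−1}, respectively E′_j/E′_{j−1}, are Z-semistable with strictly decreasing slopes), then n = m and E_i = E′_i as subobjects of E for all i. -/

import Mathlib

open CategoryTheory CategoryTheory.Limits

namespace BridgelandNotes

variable {𝒜 : Type*} [Category 𝒜] [Abelian 𝒜]

/-- `Z` is additive on short exact sequences: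
`Z(E) = Z(F) + Z(G)` whenever `0 → F → E → G → 0` is exact in `𝒜`. -/
def AdditiveOnSES (Z : 𝒜 → ℂ) : Prop :=
  ∀ S : ShortComplex 𝒜, S.ShortExact → Z S.X₂ = Z S.X₁ + Z S.X₃

/-- `Z` is a stability function on the abelian category `𝒜`: it is additive on short
exact sequences, every nonzero object satisfies `Im Z(E) ≥ 0`, and `Im Z(E) = 0`
implies `Re Z(E) < 0`. -/
def IsStabilityFunction (Z : 𝒜 → ℂ) : Prop :=
  AdditiveOnSES Z ∧
    ∀ E : 𝒜, ¬ IsZero E → 0 ≤ (Z E).im ∧ ((Z E).im = 0 → (Z E).re < 0)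

/-- The generalized rank `R(E) := Im Z(E)`. -/
def genR (Z : 𝒜 → ℂ) (E : 𝒜) : ℝ := (Z E).im

/-- The generalized degree `D(E) := -Re Z(E)`. -/
def genD (Z : 𝒜 → ℂ) (E : 𝒜) : ℝ := -(Z E).re

/-- The slope inequality `μ(A) ≤ μ(B)`, encoded for nonzero objects by
cross-multiplication: `D(A)·R(B) ≤ D(B)·R(A)`. -/
def SlopeLE (Z : 𝒜 → ℂ) (A B : 𝒜) : Prop :=
  genD Z A * genR Z B ≤ genD Z B * genR Z A

/-- The strict slope inequality `μ(A) < μ(B)`, encoded for nonzero objects by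
cross-multiplication: `D(A)·R(B) < D(B)·R(A)`. -/
def SlopeLT (Z : 𝒜 → ℂ) (A B : 𝒜) : Prop :=
  genD Z A * genR Z B < genD Z B * genR Z A

/-- A nonzero object `E` is `Z`-semistable if `μ(F) ≤ μ(E)` for every nonzero proper
subobject `F` of `E`. -/
def IsSemistable (Z : 𝒜 → ℂ) (E : 𝒜) : Prop :=
  ¬ IsZero E ∧
    ∀ (F : 𝒜) (f : F ⟶ E), Mono f → ¬ IsZero F → ¬ IsIso f → SlopeLE Z F E

/-- The abelian category `𝒜` is noetherian: every ascending chain of subobjects of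
any object stabilizes. -/
def NoetherianCategory (𝒜 : Type*) [Category 𝒜] [Abelian 𝒜] : Prop :=
  ∀ (E : 𝒜) (f : ℕ →o Subobject E), ∃ N : ℕ, ∀ n : ℕ, N ≤ n → f n = f N

/-- The image of the generalized rank `R = Im ∘ Z` is a discrete subset of `ℝ`. -/
def HasDiscreteRank (Z : 𝒜 → ℂ) : Prop :=
  ∀ x ∈ Set.range (genR Z), ∃ ε > (0 : ℝ), ∀ y ∈ Set.range (genR Z), |y - x| < ε → y = x

/-- The subquotient `T/S` of two nested subobjects `S ≤ T` of an object of `𝒜`. -/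
noncomputable def subquot {E : 𝒜} (S T : Subobject E) (h : S ≤ T) : 𝒜 :=
  cokernel (Subobject.ofLE S T h)

/-- `(n, F)` is a Harder–Narasimhan filtration of `E`: a chain of subobjects
`0 = F 0 ⊊ F 1 ⊊ … ⊊ F n = E` whose subquotients are `Z`-semistable with strictly
decreasing slopes. -/
def IsHNFiltration (Z : 𝒜 → ℂ) {E : 𝒜} (n : ℕ) (F : ℕ → Subobject E)
    (hF : ∀ i, i < n → F i < F (i + 1)) : Prop :=
  F 0 = ⊥ ∧ F n = ⊤ ∧
    (∀ i (h : i < n), IsSemistable Z (subquot (F i) (F (i + 1)) (hF i h).le)) ∧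
    ∀ i (h : i + 1 < n),
      SlopeLT Z (subquot (F (i + 1)) (F (i + 2)) (hF (i + 1) h).le)
        (subquot (F i) (F (i + 1)) (hF i (Nat.lt_of_succ_lt h)).le)

end BridgelandNotes

/-!
If `A = F'₁` is the first step of a second filtration, `A / F₀` maps nontrivially to
`F_{j+1} / F_j` for the least `j` with `A ≤ F_{j+1}`. Semistability bounds slopes through the
image, so `μ(A) ≤ μ(F_{j+1} / F_j) ≤ μ(F₁ / F₀)`, strictly unless `A ≤ F₁`. Running this in both
directions gives `F₁ = F'₁`, and one inducts on filtrations with a common first term. Slopes are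
taken in `WithTop ℝ`, where the cross-multiplied inequalities become an honest order.
-/

namespace BridgelandNotes

variable {𝒜 : Type*} {Z : 𝒜 → ℂ}

lemma SlopeLE.of_apply_eq_add {A B C : 𝒜} (h : Z B = Z A + Z C) (hAB : SlopeLE Z A B) :
    SlopeLE Z B C := by
  simp only [SlopeLE, genR, genD, h, Complex.add_im, Complex.add_re] at hAB ⊢
  linarith

section Chain

variable {α : Type*} {n : ℕ} {F : ℕ → α}

lemma chain_le [Preorder α] (hF : ∀ i, i < n → F i < F (i + 1)) {i j : ℕ} (hij : i ≤ j)
    (hjn : j ≤ n) : F i ≤ F j := by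
  induction j, hij using Nat.le_induction with
  | base => rfl
  | succ j _ ih => exact (ih (by omega)).trans (hF j (by omega)).le

lemma eq_zero_of_chain_of_apply_zero_eq_top [PartialOrder α] [OrderTop α]
    (hF : ∀ i, i < n → F i < F (i + 1)) (h0 : F 0 = ⊤) : n = 0 := by
  by_contra hn
  exact not_top_lt (h0 ▸ hF 0 (by omega))

end Chain

variable [Category 𝒜] [Abelian 𝒜]

namespace AdditiveOnSES

lemma apply_eq_add_cokernel (hZ : AdditiveOnSES Z) {X Y : 𝒜} (f : X ⟶ Y) [Mono f] :
    Z Y = Z X + Z (cokernel f) :=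
  hZ (ShortComplex.mk f (cokernel.π f) (cokernel.condition f))
    { exact := ShortComplex.exact_of_g_is_cokernel _ (cokernelIsCokernel f) }

lemma apply_eq_kernel_add (hZ : AdditiveOnSES Z) {X Y : 𝒜} (f : X ⟶ Y) [Epi f] :
    Z X = Z (kernel f) + Z Y :=
  hZ (ShortComplex.mk (kernel.ι f) f (kernel.condition f))
    { exact := ShortComplex.exact_of_f_is_kernel _ (kernelIsKernel f) }

lemma apply_eq_zero (hZ : AdditiveOnSES Z) {X : 𝒜} (hX : IsZero X) : Z X = 0 := by
  have h := hZ (ShortComplex.mk (𝟙 X) (𝟙 X) (hX.eq_of_src _ _))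
    { exact := ShortComplex.exact_of_isZero_X₂ _ hX }
  simpa using h.symm

end AdditiveOnSES

noncomputable def slope (Z : 𝒜 → ℂ) (E : 𝒜) : WithTop ℝ :=
  if genR Z E = 0 then ⊤ else ((genD Z E / genR Z E : ℝ) : WithTop ℝ)

lemma slopeLE_iff (hZ : IsStabilityFunction Z) {A B : 𝒜} (hA : ¬ IsZero A) (hB : ¬ IsZero B) :
    SlopeLE Z A B ↔ slope Z A ≤ slope Z B := by
  obtain ⟨hrA, hdA⟩ := hZ.2 A hA
  obtain ⟨hrB, hdB⟩ := hZ.2 B hB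
  simp only [SlopeLE, slope, genR, genD] at *
  rcases hrA.eq_or_lt with hA0 | hA0 <;> rcases hrB.eq_or_lt with hB0 | hB0
  · simp [← hA0, ← hB0]
  · simpa [← hA0, hB0.ne'] using mul_neg_of_neg_of_pos (hdA hA0.symm) hB0
  · simpa [← hB0, hA0.ne'] using (mul_neg_of_neg_of_pos (hdB hB0.symm) hA0).le
  · simp [hA0.ne', hB0.ne', div_le_div_iff₀ hA0 hB0]

lemma slopeLT_iff (hZ : IsStabilityFunction Z) {A B : 𝒜} (hA : ¬ IsZero A) (hB : ¬ IsZero B) :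
    SlopeLT Z A B ↔ slope Z A < slope Z B := by
  rw [← not_le, ← slopeLE_iff hZ hB hA, SlopeLE, SlopeLT, not_le]

namespace IsSemistable

lemma slopeLE_of_mono (hZ : AdditiveOnSES Z) {K A : 𝒜} (hA : IsSemistable Z A) (f : K ⟶ A)
    [Mono f] : SlopeLE Z K A := by
  by_cases hK : IsZero K
  · simp [SlopeLE, genD, genR, hZ.apply_eq_zero hK]
  by_cases hf : IsIso f
  · have h := hZ.apply_eq_add_cokernel f
    rw [hZ.apply_eq_zero (isZero_cokernel_of_epi f), add_zero] at h
    simp only [SlopeLE, genD, genR, h, le_refl]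
  exact hA.2 K f ‹_› hK hf

lemma slopeLE_of_epi (hZ : AdditiveOnSES Z) {A B : 𝒜} (hA : IsSemistable Z A) (q : A ⟶ B)
    [Epi q] : SlopeLE Z A B :=
  (hA.slopeLE_of_mono hZ (kernel.ι q)).of_apply_eq_add (hZ.apply_eq_kernel_add q)

lemma slope_le_of_ne_zero (hZ : IsStabilityFunction Z) {A Q : 𝒜} (hA : IsSemistable Z A)
    (hQ : IsSemistable Z Q) {c : A ⟶ Q} (hc : c ≠ 0) : slope Z A ≤ slope Z Q := by
  have hI : ¬ IsZero (Abelian.image c) := fun hI =>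
    hc (by rw [← Abelian.image.fac c, hI.eq_zero_of_src (Abelian.image.ι c), comp_zero])
  calc slope Z A ≤ slope Z (Abelian.image c) :=
        (slopeLE_iff hZ hA.1 hI).1 (hA.slopeLE_of_epi hZ.1 (Abelian.factorThruImage c))
    _ ≤ slope Z Q := (slopeLE_iff hZ hI hQ.1).1 (hQ.slopeLE_of_mono hZ.1 (Abelian.image.ι c))

end IsSemistable

lemma le_of_ofLE_comp_cokernel_π_eq_zero {E : 𝒜} {A S T : Subobject E} (hAT : A ≤ T)
    (hST : S ≤ T) (h : Subobject.ofLE A T hAT ≫ cokernel.π (Subobject.ofLE S T hST) = 0) :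
    A ≤ S :=
  Subobject.le_of_comm (Abelian.monoLift _ _ h) (by
    rw [← Subobject.ofLE_arrow hST, ← Category.assoc, Abelian.monoLift_comp,
      Subobject.ofLE_arrow])

lemma exists_subquot_hom_ne_zero {E : 𝒜} {G A S T : Subobject E} (hGA : G ≤ A) (hST : S ≤ T)
    (hGS : G ≤ S) (hAT : A ≤ T) (hAS : ¬ A ≤ S) :
    ∃ c : subquot G A hGA ⟶ subquot S T hST, c ≠ 0 := by
  let g := Subobject.ofLE A T hAT ≫ cokernel.π (Subobject.ofLE S T hST)
  have hg : Subobject.ofLE G A hGA ≫ g = 0 := by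
    rw [← Category.assoc, Subobject.ofLE_comp_ofLE, ← Subobject.ofLE_comp_ofLE G S T hGS hST,
      Category.assoc, cokernel.condition, comp_zero]
  refine ⟨cokernel.desc _ g hg, fun hc => hAS (le_of_ofLE_comp_cokernel_π_eq_zero hAT hST ?_)⟩
  change g = 0
  rw [← cokernel.π_desc _ g hg]
  exact (congrArg _ hc).trans comp_zero

lemma slope_subquot_le {E : 𝒜} (hZ : IsStabilityFunction Z) {G A S T : Subobject E}
    {hGA : G ≤ A} {hST : S ≤ T} (hA : IsSemistable Z (subquot G A hGA))
    (hT : IsSemistable Z (subquot S T hST)) (hGS : G ≤ S) (hAT : A ≤ T) (hAS : ¬ A ≤ S) :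
    slope Z (subquot G A hGA) ≤ slope Z (subquot S T hST) :=
  have ⟨_, hc⟩ := exists_subquot_hom_ne_zero hGA hST hGS hAT hAS
  hA.slope_le_of_ne_zero hZ hT hc

/-- `IsHNFiltration` without the condition `F 0 = ⊥`, i.e. an HN filtration of `E / F 0`;
unlike `IsHNFiltration` it survives dropping the first step. -/
structure IsHNChain (Z : 𝒜 → ℂ) {E : 𝒜} (n : ℕ) (F : ℕ → Subobject E)
    (hF : ∀ i, i < n → F i < F (i + 1)) : Prop where
  top : F n = ⊤
  semistable : ∀ i (h : i < n), IsSemistable Z (subquot (F i) (F (i + 1)) (hF i h).le)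
  slope_lt : ∀ i (h : i + 1 < n),
    slope Z (subquot (F (i + 1)) (F (i + 2)) (hF (i + 1) h).le) <
      slope Z (subquot (F i) (F (i + 1)) (hF i (by omega)).le)

lemma IsHNFiltration.isHNChain (hZ : IsStabilityFunction Z) {E : 𝒜} {n : ℕ}
    {F : ℕ → Subobject E} {hF : ∀ i, i < n → F i < F (i + 1)}
    (h : IsHNFiltration Z n F hF) : IsHNChain Z n F hF where
  top := h.2.1
  semistable := h.2.2.1
  slope_lt i hi :=
    (slopeLT_iff hZ (h.2.2.1 (i + 1) hi).1 (h.2.2.1 i (by omega)).1).1 (h.2.2.2 i hi)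

namespace IsHNChain

variable {E : 𝒜} {n m : ℕ} {F F' : ℕ → Subobject E}

lemma tail {hF : ∀ i, i < n + 1 → F i < F (i + 1)} (h : IsHNChain Z (n + 1) F hF) :
    IsHNChain Z n (fun i => F (i + 1)) (fun i hi => hF (i + 1) (by omega)) where
  top := h.top
  semistable i hi := h.semistable (i + 1) (by omega)
  slope_lt i hi := h.slope_lt (i + 1) (by omega)

lemma slope_lt_of_lt {hF : ∀ i, i < n → F i < F (i + 1)} (h : IsHNChain Z n F hF) {i j : ℕ}
    (hij : i < j) (hjn : j < n) :
    slope Z (subquot (F j) (F (j + 1)) (hF j hjn).le) <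
      slope Z (subquot (F i) (F (i + 1)) (hF i (by omega)).le) := by
  induction j, hij using Nat.le_induction with
  | base => exact h.slope_lt i hjn
  | succ j hij ih => exact (h.slope_lt j hjn).trans (ih (by omega))

lemma slope_le_first (hZ : IsStabilityFunction Z) {hF : ∀ i, i < n → F i < F (i + 1)}
    (h : IsHNChain Z n F hF) {j : ℕ} (hj : j < n) {A : Subobject E} (hA : F 0 < A)
    (hAss : IsSemistable Z (subquot (F 0) A hA.le)) (hAj : A ≤ F (j + 1)) :
    slope Z (subquot (F 0) A hA.le) ≤ slope Z (subquot (F 0) (F 1) (hF 0 (by omega)).le) ∧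
      (¬ A ≤ F 1 →
        slope Z (subquot (F 0) A hA.le) < slope Z (subquot (F 0) (F 1) (hF 0 (by omega)).le)) := by
  induction j with
  | zero =>
    exact ⟨slope_subquot_le hZ hAss (h.semistable 0 hj) le_rfl hAj hA.not_ge,
      fun hA1 => absurd hAj hA1⟩
  | succ j ih =>
    by_cases hAj' : A ≤ F (j + 1)
    · exact ih (by omega) hAj'
    have hlt := (slope_subquot_le hZ hAss (h.semistable (j + 1) hj)
      (chain_le hF (Nat.zero_le _) (by omega)) hAj hAj').trans_lt
        (h.slope_lt_of_lt (Nat.succ_pos j) hj)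
    exact ⟨hlt.le, fun _ => hlt⟩

lemma apply_one_eq (hZ : IsStabilityFunction Z) {hF : ∀ i, i < n + 1 → F i < F (i + 1)}
    {hF' : ∀ i, i < m + 1 → F' i < F' (i + 1)} (h : IsHNChain Z (n + 1) F hF)
    (h' : IsHNChain Z (m + 1) F' hF') (h0 : F 0 = F' 0) : F 1 = F' 1 := by
  have hA : F 0 < F' 1 := h0 ▸ hF' 0 (by omega)
  have hA' : F' 0 < F 1 := h0 ▸ hF 0 (by omega)
  have e : subquot (F 0) (F' 1) hA.le = subquot (F' 0) (F' 1) (hF' 0 (by omega)).le := by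
    congr
  have e' : subquot (F' 0) (F 1) hA'.le = subquot (F 0) (F 1) (hF 0 (by omega)).le := by
    congr 1; exact h0.symm
  obtain ⟨le1, lt1⟩ := h.slope_le_first hZ (Nat.lt_succ_self n) hA
    (e ▸ h'.semistable 0 (by omega)) (h.top ▸ le_top)
  obtain ⟨le2, lt2⟩ := h'.slope_le_first hZ (Nat.lt_succ_self m) hA'
    (e' ▸ h.semistable 0 (by omega)) (h'.top ▸ le_top)
  rw [e] at le1 lt1
  rw [e'] at le2 lt2
  exact le_antisymm (not_not.1 fun h1 => (lt2 h1).not_ge le1)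
    (not_not.1 fun h1 => (lt1 h1).not_ge le2)

theorem unique (hZ : IsStabilityFunction Z) {hF : ∀ i, i < n → F i < F (i + 1)}
    {hF' : ∀ i, i < m → F' i < F' (i + 1)} (h : IsHNChain Z n F hF) (h' : IsHNChain Z m F' hF')
    (h0 : F 0 = F' 0) : n = m ∧ ∀ i, i ≤ n → F i = F' i := by
  induction n generalizing m F F' with
  | zero =>
    have hm := eq_zero_of_chain_of_apply_zero_eq_top hF' (h0 ▸ h.top)
    exact ⟨hm.symm, fun i hi => Nat.le_zero.1 hi ▸ h0⟩
  | succ n ih =>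
    obtain _ | m := m
    · exact absurd (eq_zero_of_chain_of_apply_zero_eq_top hF (h0.trans h'.top)) n.succ_ne_zero
    obtain ⟨rfl, htail⟩ := ih h.tail h'.tail (h.apply_one_eq hZ h' h0)
    refine ⟨rfl, fun i hi => ?_⟩
    cases i with
    | zero => exact h0
    | succ i => exact htail i (by omega)

end IsHNChain

theorem hn_filtration_unique_general (Z : 𝒜 → ℂ) (hZ : IsStabilityFunction Z)
    (E : 𝒜) (n m : ℕ) (F F' : ℕ → Subobject E)
    (hF : ∀ i, i < n → F i < F (i + 1)) (hF' : ∀ i, i < m → F' i < F' (i + 1))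
    (h1 : IsHNFiltration Z n F hF) (h2 : IsHNFiltration Z m F' hF') :
    n = m ∧ ∀ i, i ≤ n → F i = F' i :=
  (h1.isHNChain hZ).unique hZ (h2.isHNChain hZ) (h1.1.trans h2.1.symm)

/-- Uniqueness of Harder–Narasimhan filtrations: any two Harder–Narasimhan filtrations
of a nonzero object `E` have the same length and the same terms. -/
theorem hn_filtration_unique (Z : 𝒜 → ℂ) (hZ : IsStabilityFunction Z)
    (E : 𝒜) (hE : ¬ IsZero E) (n m : ℕ) (F F' : ℕ → Subobject E)
    (hF : ∀ i, i < n → F i < F (i + 1)) (hF' : ∀ i, i < m → F' i < F' (i + 1))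
    (h1 : IsHNFiltration Z n F hF) (h2 : IsHNFiltration Z m F' hF') :
    n = m ∧ ∀ i, i ≤ n → F i = F' i :=
  hn_filtration_unique_general Z hZ E n m F F' hF hF' h1 h2

end BridgelandNotes
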